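/- arXiv:2408.10606 — 3 statements merged into one kernel-verified Lean document; each statement's English description precedes it below -/
import Mathlib

section
/- Let G be a finite group of even order that is not a p-group for any prime p. Then the order superpower graph S(G) is not minimally edge connected. -/
/-- The degree of a vertex: the number of its neighbours. -/
noncomputable def gDeg {V : Type*} (G : SimpleGraph V) (v : V) : ℕ :=
  (G.neighborSet v).ncard

/-- The minimum degree of a graph. -/
noncomputable def minDeg {V : Type*} (G : SimpleGraph V) : ℕ :=
  sInf (Set.range (gDeg G))

/-- The edge connectivity: the minimum size of a set of edges whose removal
disconnects the graph. -/
noncomputable def edgeConn {V : Type*} (G : SimpleGraph V) : ℕ :=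
  sInf {n : ℕ | ∃ S : Set (Sym2 V), S ⊆ G.edgeSet ∧ S.ncard = n ∧
    ¬ (G.deleteEdges S).Connected}

/-- The vertex connectivity: the minimum size of a set of vertices whose removal
disconnects the graph or leaves a single vertex. -/
noncomputable def vertexConn {V : Type*} (G : SimpleGraph V) : ℕ :=
  sInf {n : ℕ | ∃ S : Set V, S.ncard = n ∧ Sᶜ.Nonempty ∧
    (¬ (G.induce Sᶜ).Preconnected ∨ Sᶜ.ncard = 1)}

/-- A graph is minimally edge connected if deleting any edge decreases the
edge connectivity by one. -/
def MinEdgeConnected {V : Type*} (G : SimpleGraph V) : Prop :=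
  ∀ e ∈ G.edgeSet, edgeConn (G.deleteEdges {e}) = edgeConn G - 1

/-- A graph is minimally connected if deleting any edge decreases the
vertex connectivity by one. -/
def MinConnected {V : Type*} (G : SimpleGraph V) : Prop :=
  ∀ e ∈ G.edgeSet, vertexConn (G.deleteEdges {e}) = vertexConn G - 1

/-- The power graph of a group: distinct `x, y` are adjacent iff one is a
natural power of the other. -/
def powerGraph (G : Type*) [Group G] : SimpleGraph G :=
  SimpleGraph.fromRel (fun x y => ∃ m : ℕ, y = x ^ m)

/-- The enhanced power graph of a group: distinct `x, y` are adjacent iff they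
lie in a common cyclic subgroup. -/
def enhancedPowerGraph (G : Type*) [Group G] : SimpleGraph G :=
  SimpleGraph.fromRel
    (fun x y => ∃ z : G, x ∈ Subgroup.zpowers z ∧ y ∈ Subgroup.zpowers z)

/-- The order superpower graph of a group: distinct `x, y` are adjacent iff the
order of one divides the order of the other. -/
def superpowerGraph (G : Type*) [Group G] : SimpleGraph G :=
  SimpleGraph.fromRel (fun x y => orderOf x ∣ orderOf y)

/-!
The identity is a universal vertex of `S(G)`. If `T` is a set of edges whose removal disconnects
a graph with a universal vertex `h`, and `v` lies outside the component `A` of `h`, then `T`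
contains the boundary of `A`, which has at least `deg v` edges: those from `v` into `A` and those
from `h` to the other vertices outside `A`. So an edge `hx` with `deg x > κ'` lies in no
disconnecting set of size `κ'`, whereas in a minimally edge connected graph every edge does.

Such an `x` exists in `S(G)`: an element of prime order `p` is adjacent exactly to `1` and to the
elements of order divisible by `p`. Pairing `y` with `y⁻¹` shows that there is an even number of
those when `p` is odd, and an odd number when `p = 2` and `|G|` is even. So elements of orders
`2` and `q`, for an odd prime `q ∣ |G|`, have different degrees, and they cannot both equal `κ'`.
-/

open SimpleGraph

section EdgeConnectivity

variable {V : Type*} [Nontrivial V] (H : SimpleGraph V)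

lemma exists_disconnecting_edgeSet_ncard_eq_edgeConn :
    ∃ S ⊆ H.edgeSet, S.ncard = edgeConn H ∧ ¬(H.deleteEdges S).Connected := by
  refine Nat.sInf_mem
    (s := {n | ∃ S ⊆ H.edgeSet, S.ncard = n ∧ ¬(H.deleteEdges S).Connected})
    ⟨_, H.edgeSet, subset_rfl, rfl, fun hconn => ?_⟩
  obtain ⟨v, w, hvw⟩ := exists_pair_ne V
  obtain ⟨u, hvu⟩ := (hconn.preconnected v w).nonempty_neighborSet_left hvw
  obtain ⟨hadj, hnot⟩ := (H.deleteEdges_adj ..).mp hvu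
  exact hnot hadj

lemma edgeConn_le_gDeg (v : V) : edgeConn H ≤ gDeg H v := by
  classical
  refine Nat.sInf_le ⟨H.incidenceSet v, H.incidenceSet_subset v, ?_, fun hconn => ?_⟩
  · rw [gDeg, ← Nat.card_coe_set_eq, ← Nat.card_coe_set_eq]
    exact Nat.card_congr (H.incidenceSetEquivNeighborSet v)
  · obtain ⟨w, hvw⟩ := exists_ne v
    obtain ⟨u, hvu⟩ := (hconn.preconnected v w).nonempty_neighborSet_left hvw.symm
    obtain ⟨hadj, hnot⟩ := (H.deleteEdges_adj ..).mp hvu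
    exact hnot (H.mk'_mem_incidenceSet_left_iff.mpr hadj)

variable {H}

lemma edgeConn_pos [Finite V] (hconn : H.Connected) : 0 < edgeConn H := by
  obtain ⟨S, -, hcard, hdisc⟩ := exists_disconnecting_edgeSet_ncard_eq_edgeConn H
  refine Nat.pos_of_ne_zero fun h0 => hdisc ?_
  rwa [(Set.ncard_eq_zero).mp (hcard.trans h0), deleteEdges_empty]

end EdgeConnectivity

section EdgeBoundary

variable {V : Type*} (H : SimpleGraph V)

def SimpleGraph.edgeBoundary (A : Set V) : Set (Sym2 V) :=
  {e | ∃ a ∈ A, ∃ b ∉ A, H.Adj a b ∧ e = s(a, b)}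

variable {H}

lemma edgeBoundary_setOf_reachable_deleteEdges_subset {h : V} {T : Set (Sym2 V)} :
    H.edgeBoundary {u | (H.deleteEdges T).Reachable h u} ⊆ T := by
  rintro _ ⟨a, ha, b, hb, hab, rfl⟩
  by_contra hT
  exact hb (ha.trans ((H.deleteEdges_adj ..).mpr ⟨hab, hT⟩).reachable)

lemma mk_notMem_edgeBoundary_of_mem {A : Set V} {a b : V} (ha : a ∈ A) (hb : b ∈ A) :
    s(a, b) ∉ H.edgeBoundary A := by
  rintro ⟨c, -, d, hd, -, heq⟩
  rcases Sym2.eq_iff.mp heq with ⟨-, rfl⟩ | ⟨rfl, -⟩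
  · exact hd hb
  · exact hd ha

/-- Each neighbour `w` of `v` yields a boundary edge: `vw` if `w ∈ A`, and `hw` otherwise. -/
lemma gDeg_le_ncard_edgeBoundary [Finite V] {h : V} (hh : H.IsUniversal h) {A : Set V}
    (hA : h ∈ A) {v : V} (hv : v ∉ A) : gDeg H v ≤ (H.edgeBoundary A).ncard := by
  classical
  refine Set.ncard_le_ncard_of_injOn (fun w => if w ∈ A then s(v, w) else s(h, w)) ?_ ?_
  · intro w hw
    have hvw : H.Adj v w := hw
    by_cases hwA : w ∈ A
    · exact ⟨w, hwA, v, hv, hvw.symm, by simp [hwA, Sym2.eq_swap]⟩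
    · exact ⟨h, hA, w, hwA, hh (ne_of_mem_of_not_mem hA hwA), by simp [hwA]⟩
  · intro w hw w' hw' heq
    have hvw : H.Adj v w := hw
    have hvw' : H.Adj v w' := hw'
    by_cases hwA : w ∈ A <;> by_cases hw'A : w' ∈ A <;>
      simp only [hwA, hw'A, if_true, if_false, Sym2.eq_iff] at heq
    · exact heq.elim And.right fun e => (hvw.ne e.2.symm).elim
    · exact heq.elim (fun e => (hv (e.1 ▸ hA)).elim) fun e => (hvw'.ne e.1).elim
    · exact heq.elim (fun e => (hv (e.1 ▸ hA)).elim) fun e => (hvw.ne e.2.symm).elim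
    · exact heq.elim And.right fun e => e.2.trans e.1

end EdgeBoundary

theorem not_minEdgeConnected_of_isUniversal {V : Type*} [Finite V] {H : SimpleGraph V} {h x : V}
    (hh : H.IsUniversal h) (hxh : h ≠ x) (hx : edgeConn H < gDeg H x) :
    ¬MinEdgeConnected H := by
  intro hmin
  have : Nontrivial V := nontrivial_of_ne h x hxh
  have hκ := edgeConn_pos (Connected.of_isUniversal hh)
  obtain ⟨S, -, hScard, hSdisc⟩ :=
    exists_disconnecting_edgeSet_ncard_eq_edgeConn (H.deleteEdges {s(h, x)})
  rw [hmin _ (hh hxh)] at hScard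
  set T := insert s(h, x) S with hT
  have hTcard : T.ncard ≤ edgeConn H := (Set.ncard_insert_le _ _).trans (by omega)
  have hTdisc : ¬(H.deleteEdges T).Connected := by
    rwa [hT, Set.insert_eq, ← deleteEdges_deleteEdges]
  set A := {u | (H.deleteEdges T).Reachable h u}
  have hhA : h ∈ A := Reachable.refl h
  obtain ⟨v, hv⟩ : ∃ v, v ∉ A := by
    by_contra! hall
    exact hTdisc ((connected_iff_exists_forall_reachable _).mpr ⟨h, hall⟩)
  have hcut : H.edgeBoundary A ⊆ T := edgeBoundary_setOf_reachable_deleteEdges_subset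
  by_cases hxA : x ∈ A
  · have hlt : (H.edgeBoundary A).ncard < T.ncard :=
      Set.ncard_lt_ncard ((Set.ssubset_iff_of_subset hcut).mpr
        ⟨_, Set.mem_insert _ _, mk_notMem_edgeBoundary_of_mem hhA hxA⟩)
    have := gDeg_le_ncard_edgeBoundary hh hhA hv
    have := edgeConn_le_gDeg H v
    omega
  · have := gDeg_le_ncard_edgeBoundary hh hhA hxA
    have := Set.ncard_le_ncard hcut
    omega

section Involution

variable {α : Type*} [Finite α] {f : α → α}

lemma Function.Involutive.even_ncard_of_forall_ne (hf : f.Involutive) {s : Set α}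
    (hs : Set.MapsTo f s s) (hne : ∀ a ∈ s, f a ≠ a) : Even s.ncard := by
  classical
  have := Fintype.ofFinite α
  have hsum : ∑ _a ∈ s.toFinset, (1 : ZMod 2) = 0 :=
    Finset.sum_involution (fun a _ => f a) (fun _ _ => by decide)
      (fun a ha _ => hne a (Set.mem_toFinset.mp ha))
      (fun a ha => Set.mem_toFinset.mpr (hs (Set.mem_toFinset.mp ha))) (fun a _ => hf a)
  rw [Finset.sum_const, nsmul_eq_mul, mul_one, ZMod.natCast_eq_zero_iff] at hsum
  rw [Set.ncard_eq_toFinset_card']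
  exact even_iff_two_dvd.mpr hsum

lemma Function.Involutive.ncard_modEq_ncard_inter_fixedPoints (hf : f.Involutive) {s : Set α}
    (hs : Set.MapsTo f s s) : s.ncard ≡ (s ∩ Function.fixedPoints f).ncard [MOD 2] := by
  obtain ⟨k, hk⟩ := hf.even_ncard_of_forall_ne (s := s \ Function.fixedPoints f)
    (fun a ha => ⟨hs ha.1, fun hfix => ha.2 (hf.injective hfix)⟩) (fun a ha => ha.2)
  rw [← Set.ncard_inter_add_ncard_sdiff_eq_ncard s (Function.fixedPoints f), hk]
  unfold Nat.ModEq
  omega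

end Involution

section SuperpowerGraph

variable {G : Type*} [Group G]

lemma superpowerGraph_adj {a b : G} :
    (superpowerGraph G).Adj a b ↔ a ≠ b ∧ (orderOf a ∣ orderOf b ∨ orderOf b ∣ orderOf a) :=
  fromRel_adj ..

lemma superpowerGraph_isUniversal_one : (superpowerGraph G).IsUniversal 1 := fun _ hx =>
  superpowerGraph_adj.mpr ⟨hx, .inl (orderOf_one (G := G) ▸ one_dvd _)⟩

lemma gDeg_superpowerGraph_of_orderOf_eq_prime [Finite G] {p : ℕ} (hp : p.Prime) {t : G}
    (ht : orderOf t = p) : gDeg (superpowerGraph G) t = {y : G | p ∣ orderOf y}.ncard := by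
  have hneighbors : (superpowerGraph G).neighborSet t = insert 1 {y : G | p ∣ orderOf y} \ {t} := by
    ext y
    simp only [mem_neighborSet, superpowerGraph_adj, ht, Nat.dvd_prime hp, orderOf_eq_one_iff,
      Set.mem_sdiff, Set.mem_insert_iff, Set.mem_ofPred_eq, Set.mem_singleton_iff]
    constructor
    · rintro ⟨hty, hdvd | rfl | hy⟩
      · exact ⟨.inr hdvd, hty.symm⟩
      · exact ⟨.inl rfl, hty.symm⟩
      · exact ⟨.inr hy.symm.dvd, hty.symm⟩
    · rintro ⟨rfl | hdvd, hyt⟩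
      · exact ⟨Ne.symm hyt, .inr (.inl rfl)⟩
      · exact ⟨Ne.symm hyt, .inl hdvd⟩
  have h1 : (1 : G) ∉ {y : G | p ∣ orderOf y} := by simpa using hp.one_lt.ne'
  rw [gDeg, hneighbors, Set.ncard_sdiff_singleton_of_mem (by simp [ht]),
    Set.ncard_insert_of_notMem h1]
  rfl

end SuperpowerGraph

section Parity

variable {G : Type*} [Group G] [Finite G]

lemma ncard_setOf_dvd_orderOf_modEq (k : ℕ) :
    {y : G | k ∣ orderOf y}.ncard ≡ {y : G | k ∣ orderOf y ∧ orderOf y ∣ 2}.ncard [MOD 2] := by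
  convert inv_involutive.ncard_modEq_ncard_inter_fixedPoints (s := {y : G | k ∣ orderOf y})
    (fun y hy => by simpa [orderOf_inv] using hy) using 3
  ext y
  simp [Function.IsFixedPt, orderOf_dvd_iff_pow_eq_one, sq, inv_eq_iff_mul_eq_one]

lemma even_ncard_setOf_dvd_orderOf {q : ℕ} (hq : ¬q ∣ 2) : Even {y : G | q ∣ orderOf y}.ncard := by
  have hfix : {y : G | q ∣ orderOf y ∧ orderOf y ∣ 2} = ∅ :=
    Set.eq_empty_of_forall_notMem fun y hy => hq (hy.1.trans hy.2)
  have := ncard_setOf_dvd_orderOf_modEq (G := G) q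
  rw [hfix, Set.ncard_empty] at this
  exact Nat.even_iff.mpr this

lemma odd_ncard_setOf_two_dvd_orderOf (heven : Even (Nat.card G)) :
    Odd {y : G | 2 ∣ orderOf y}.ncard := by
  have hfix : {y : G | orderOf y ∣ 2} = insert 1 {y : G | 2 ∣ orderOf y ∧ orderOf y ∣ 2} := by
    ext y
    simp only [Set.mem_insert_iff, Set.mem_ofPred_eq]
    rw [← orderOf_eq_one_iff, Nat.dvd_prime Nat.prime_two]
    omega
  have hall := ncard_setOf_dvd_orderOf_modEq (G := G) 1
  simp only [one_dvd, true_and, Set.ofPred_true, Set.ncard_univ] at hall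
  rw [hfix, Set.ncard_insert_of_notMem (by simp)] at hall
  have htwo := ncard_setOf_dvd_orderOf_modEq (G := G) 2
  rw [Nat.odd_iff]
  rw [Nat.even_iff] at heven
  unfold Nat.ModEq at hall htwo
  omega

end Parity

/-- If `G` is a finite group of even order that is not a `p`-group
for any prime `p`, then its order superpower graph is not minimally edge
connected. -/
theorem stmt_9 (G : Type*) [Group G] [Fintype G]
    (heven : Even (Nat.card G))
    (hnp : ¬ ∃ p n : ℕ, p.Prime ∧ Nat.card G = p ^ n) :
    ¬ MinEdgeConnected (superpowerGraph G) := by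
  obtain ⟨q, hq, hqG, hq2⟩ : ∃ q : ℕ, q.Prime ∧ q ∣ Nat.card G ∧ q ≠ 2 := by
    by_contra! h
    exact hnp ⟨2, _, Nat.prime_two, Nat.eq_prime_pow_of_unique_prime_dvd Nat.card_pos.ne' (h _)⟩
  have := Fact.mk hq
  have := Fact.mk Nat.prime_two
  obtain ⟨t, ht⟩ := exists_prime_orderOf_dvd_card' (G := G) 2 (even_iff_two_dvd.mp heven)
  obtain ⟨u, hu⟩ := exists_prime_orderOf_dvd_card' (G := G) q hqG
  have hdeg : gDeg (superpowerGraph G) t ≠ gDeg (superpowerGraph G) u := by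
    rw [gDeg_superpowerGraph_of_orderOf_eq_prime Nat.prime_two ht,
      gDeg_superpowerGraph_of_orderOf_eq_prime hq hu]
    have hq_not_dvd : ¬q ∣ 2 := (Nat.prime_dvd_prime_iff_eq hq Nat.prime_two).not.mpr hq2
    exact fun h => Nat.not_even_iff_odd.mpr (odd_ncard_setOf_two_dvd_orderOf heven)
      (h ▸ even_ncard_setOf_dvd_orderOf hq_not_dvd)
  have ht1 : t ≠ 1 := fun h => Nat.prime_two.ne_one (ht ▸ orderOf_eq_one_iff.mpr h)
  have hu1 : u ≠ 1 := fun h => hq.ne_one (hu ▸ orderOf_eq_one_iff.mpr h)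
  obtain ⟨x, hx1, hx⟩ :
      ∃ x ≠ (1 : G), edgeConn (superpowerGraph G) < gDeg (superpowerGraph G) x := by
    have : Nontrivial G := nontrivial_of_ne t 1 ht1
    rcases hdeg.lt_or_gt with h | h
    · exact ⟨u, hu1, (edgeConn_le_gDeg _ t).trans_lt h⟩
    · exact ⟨t, ht1, (edgeConn_le_gDeg _ u).trans_lt h⟩
  exact not_minEdgeConnected_of_isUniversal superpowerGraph_isUniversal_one hx1.symm hx
end

section
/- Let G be a finite group that is not a p-group for any prime p, and suppose x ∈ G is a vertex of the order superpower graph S(G) whose degree equals the minimum degree δ(S(G)), and that δ(S(G)) = κ(S(G)). Then x has order 2 and x is the unique element of order 2 in G. -/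
/-- Let `G` be a finite group that is not a `p`-group, and let
`x ∈ G` have degree equal to the minimum degree of the order superpower graph,
with the minimum degree equal to the vertex connectivity. Then `x` is the unique
element of order `2` in `G`. -/
theorem stmt_16 (G : Type*) [Group G] [Fintype G]
    (hnp : ¬ ∃ p n : ℕ, p.Prime ∧ Nat.card G = p ^ n) (x : G)
    (hx : gDeg (superpowerGraph G) x = minDeg (superpowerGraph G))
    (heq : minDeg (superpowerGraph G) = vertexConn (superpowerGraph G)) :
    orderOf x = 2 ∧ ∀ y : G, orderOf y = 2 → y = x := by
  classical
  set Γ := superpowerGraph G with hΓ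
  have hadj : ∀ a b : G, Γ.Adj a b ↔ a ≠ b ∧ (orderOf a ∣ orderOf b ∨ orderOf b ∣ orderOf a) :=
    fun a b => SimpleGraph.fromRel_adj _ a b
  -- two distinct primes dividing the order of G
  have hn0 : Nat.card G ≠ 0 := Nat.card_pos.ne'
  obtain ⟨p, q, hp, hq, hpq, hpd, hqd⟩ :
      ∃ p q, Nat.Prime p ∧ Nat.Prime q ∧ p ≠ q ∧ p ∣ Nat.card G ∧ q ∣ Nat.card G := by
    by_cases h1 : Nat.card G = 1
    · exact absurd ⟨2, 0, Nat.prime_two, by rw [pow_zero, h1]⟩ hnp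
    have hp : (Nat.card G).minFac.Prime := Nat.minFac_prime h1
    set n := Nat.card G with hn
    set p := n.minFac
    set m := n / p ^ n.factorization p with hm
    have hmd : m ∣ n := Nat.div_dvd_of_dvd (Nat.ordProj_dvd n p)
    have hpm : ¬ p ∣ m := Nat.not_dvd_ordCompl hp hn0
    by_cases hm1 : m = 1
    · refine absurd ⟨p, n.factorization p, hp, ?_⟩ hnp
      have h2 := Nat.ordProj_mul_ordCompl_eq_self n p
      rw [← hm, hm1, mul_one] at h2
      exact h2.symm
    · refine ⟨p, m.minFac, hp, Nat.minFac_prime hm1, ?_, Nat.minFac_dvd n,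
        (Nat.minFac_dvd m).trans hmd⟩
      intro hEq
      exact hpm (hEq ▸ Nat.minFac_dvd m)
  haveI := Fact.mk hp
  haveI := Fact.mk hq
  obtain ⟨u, hu⟩ := exists_prime_orderOf_dvd_card (G := G) p (by rwa [← Nat.card_eq_fintype_card])
  obtain ⟨w, hw⟩ := exists_prime_orderOf_dvd_card (G := G) q (by rwa [← Nat.card_eq_fintype_card])
  have huw : u ≠ w := by
    intro h; rw [h, hw] at hu; exact hpq hu.symm
  -- the comparability cone of x
  set d := orderOf x with hd
  set C : Set G := {y | orderOf y ∣ d ∨ d ∣ orderOf y} with hC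
  have hxC : x ∈ C := Or.inl dvd_rfl
  have hN : ∀ a : G, orderOf a = d → Γ.neighborSet a = C \ {a} := by
    intro a ha
    ext y
    simp only [SimpleGraph.mem_neighborSet, hadj, hC, Set.mem_diff, Set.mem_setOf_eq,
      Set.mem_singleton_iff, ha]
    constructor
    · rintro ⟨h1, h2⟩; exact ⟨h2.symm.imp id id, fun h => h1 h.symm⟩
    · rintro ⟨h1, h2⟩; exact ⟨fun h => h2 h.symm, h1.symm.imp id id⟩
  have hdeg : gDeg Γ x = C.ncard - 1 := by
    rw [gDeg, hN x rfl, Set.ncard_diff_singleton_of_mem hxC]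
  -- u has a non-neighbour w, so min degree ≤ card − 2
  have hsub : Γ.neighborSet u ⊆ Set.univ \ ({u, w} : Set G) := by
    intro y hy
    rw [SimpleGraph.mem_neighborSet, hadj] at hy
    refine ⟨trivial, ?_⟩
    rintro (rfl | rfl)
    · exact hy.1 rfl
    · rw [hu, hw] at hy
      rcases hy.2 with h | h
      · exact hpq ((Nat.prime_dvd_prime_iff_eq hp hq).1 h)
      · exact hpq ((Nat.prime_dvd_prime_iff_eq hq hp).1 h).symm
  have hcard2 : 2 ≤ Nat.card G := by
    have : Nontrivial G := ⟨u, w, huw⟩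
    have := Fintype.one_lt_card (α := G)
    rwa [Nat.card_eq_fintype_card]
  have hu2 : gDeg Γ u ≤ Nat.card G - 2 := by
    calc gDeg Γ u = (Γ.neighborSet u).ncard := rfl
      _ ≤ (Set.univ \ ({u, w} : Set G)).ncard := Set.ncard_le_ncard hsub (Set.toFinite _)
      _ = Nat.card G - 2 := by
          rw [Set.ncard_diff (Set.subset_univ _), Set.ncard_univ, Set.ncard_pair huw]
  have hmle : minDeg Γ ≤ gDeg Γ u := Nat.sInf_le ⟨u, rfl⟩
  -- there is a vertex incomparable with d
  obtain ⟨z, hz⟩ : ∃ z, z ∉ C := by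
    by_contra h
    push_neg at h
    have hCu : C = Set.univ := Set.eq_univ_of_forall h
    have h1 : C.ncard = Nat.card G := by rw [hCu, Set.ncard_univ]
    rw [hx] at hdeg
    omega
  have hd1 : d ≠ 1 := by
    intro h
    exact hz (Or.inr (h ▸ one_dvd _))
  -- uniqueness of elements of order d
  have huniq : ∀ y : G, orderOf y = d → y = x := by
    intro y hy
    by_contra hne
    set S : Set G := C \ {x, y} with hS
    have hyC : y ∈ C := Or.inl (hy ▸ dvd_rfl)
    have hxSc : x ∈ Sᶜ := fun h => h.2 (Or.inl rfl)
    have hzSc : z ∈ Sᶜ := fun h => hz h.1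
    have hnpre : ¬ (Γ.induce Sᶜ).Preconnected := by
      intro hpre
      obtain ⟨W⟩ := hpre ⟨x, hxSc⟩ ⟨z, hzSc⟩
      have key : ∀ (a b : ↥Sᶜ) (_ : (Γ.induce Sᶜ).Walk a b),
          ((a : G) = x ∨ (a : G) = y) → ((b : G) = x ∨ (b : G) = y) := by
        intro a b W
        induction W with
        | nil => exact id
        | cons hab _ ih =>
          rename_i a' b' c' _
          intro ha
          apply ih
          have hadj' : Γ.Adj (a' : G) (b' : G) := hab
          have horda : orderOf (a' : G) = d := by
            rcases ha with h | h
            · rw [h]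
            · rw [h, hy]
          have hbC : (b' : G) ∈ C := by
            rcases (hadj _ _).1 hadj' with ⟨_, h | h⟩
            · exact Or.inr (horda ▸ h)
            · exact Or.inl (horda ▸ h)
          have hbSc := b'.2
          by_contra hb
          push_neg at hb
          exact hbSc ⟨hbC, by
            rintro (h | h)
            · exact hb.1 h
            · exact hb.2 h⟩
      rcases key _ _ W (Or.inl rfl) with h | h
      · have h' : z = x := h
        exact hz (h' ▸ hxC)
      · have h' : z = y := h
        exact hz (h' ▸ hyC)
    have hmem : ∃ T : Set G, T.ncard = S.ncard ∧ Tᶜ.Nonempty ∧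
        (¬ (Γ.induce Tᶜ).Preconnected ∨ Tᶜ.ncard = 1) :=
      ⟨S, rfl, ⟨z, hzSc⟩, Or.inl hnpre⟩
    have hle : vertexConn Γ ≤ S.ncard := Nat.sInf_le hmem
    have hScard : S.ncard = C.ncard - 2 := by
      have hSeq : S = (C \ {x}) \ {y} := by
        rw [hS]
        ext v
        simp only [Set.mem_diff, Set.mem_insert_iff, Set.mem_singleton_iff]
        tauto
      rw [hSeq, Set.ncard_diff_singleton_of_mem (by simp only [Set.mem_diff, Set.mem_singleton_iff]; exact ⟨hyC, hne⟩),
        Set.ncard_diff_singleton_of_mem hxC]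
      omega
    have h2C : 2 ≤ C.ncard := by
      have : ({x, y} : Set G) ⊆ C := by
        rintro v (rfl | rfl)
        · exact hxC
        · exact hyC
      calc 2 = ({x, y} : Set G).ncard := (Set.ncard_pair (Ne.symm hne)).symm
        _ ≤ C.ncard := Set.ncard_le_ncard this (Set.toFinite _)
    rw [hx, heq] at hdeg
    omega
  -- conclude d = 2
  have hinv : x⁻¹ = x := huniq x⁻¹ (orderOf_inv x)
  have hx2 : x ^ 2 = 1 := by
    rw [pow_two]
    calc x * x = x * x⁻¹ := by rw [hinv]
      _ = 1 := mul_inv_cancel x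
  have hdvd : d ∣ 2 := orderOf_dvd_iff_pow_eq_one.2 hx2
  have hd2 : d = 2 := by
    rcases (Nat.dvd_prime Nat.prime_two).1 hdvd with h | h
    · exact absurd h hd1
    · exact h
  exact ⟨hd2, fun y hy => huniq y (by rw [hy, hd2])⟩
end

section
/- Let p be an odd prime, let P be a nontrivial finite p-group, and let G = Z_2 × P. Then the minimum degree of the order superpower graph S(G) is |P|, this minimum degree is attained exactly at the unique element of order 2 in G, and the vertex connectivity of S(G) also equals |P|. -/
set_option linter.unusedSectionVars false

private def uu : Multiplicative (ZMod 2) := Multiplicative.ofAdd 1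

private lemma uu_ne_one : uu ≠ 1 := by decide

private lemma mm_cases (a : Multiplicative (ZMod 2)) : a = 1 ∨ a = uu := by
  revert a; decide

private lemma orderOf_uu : orderOf uu = 2 :=
  orderOf_eq_prime (by rw [pow_two]; decide) (by decide)

private lemma sp_adj {Γ : Type*} [Group Γ] {v w : Γ} :
    (superpowerGraph Γ).Adj v w ↔ v ≠ w ∧ (orderOf v ∣ orderOf w ∨ orderOf w ∣ orderOf v) := by
  simp [superpowerGraph, SimpleGraph.fromRel_adj]

private lemma reach_cases {α : Type*} {Γ : SimpleGraph α} {u v : α} (h : Γ.Reachable u v) :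
    u = v ∨ ∃ w, Γ.Adj u w := by
  obtain ⟨w⟩ := h
  cases w with
  | nil => exact Or.inl rfl
  | cons h _ => exact Or.inr ⟨_, h⟩

private lemma induce_adj' {α : Type*} {Γ : SimpleGraph α} {s : Set α} {u v : ↥s}
    (h : Γ.Adj ↑u ↑v) : (Γ.induce s).Adj u v := h

private lemma cardMM : Nat.card (Multiplicative (ZMod 2)) = 2 := by
  rw [Nat.card_congr Multiplicative.toAdd, Nat.card_zmod]

section Main

variable {p : ℕ} {P : Type*} [Group P] [Fintype P] [Nontrivial P]

local notation "G" => (Multiplicative (ZMod 2) × P)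
local notation "SG" => superpowerGraph (Multiplicative (ZMod 2) × P)

private lemma ord_mk1 (x : P) : orderOf (((1 : Multiplicative (ZMod 2)), x) : G) = orderOf x := by
  rw [Prod.orderOf_mk, orderOf_one, Nat.lcm_one_left]

private lemma ord_mku (x : P) : orderOf ((uu, x) : G) = Nat.lcm 2 (orderOf x) := by
  rw [Prod.orderOf_mk, orderOf_uu]

private lemma mk1_inj : Function.Injective (fun x : P => (((1 : Multiplicative (ZMod 2)), x) : G)) :=
  fun _ _ h => congrArg Prod.snd h

private lemma mku_inj : Function.Injective (fun x : P => ((uu, x) : G)) :=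
  fun _ _ h => congrArg Prod.snd h

private lemma ncard_ne (x : P) : ({y : P | y ≠ x}).ncard = Nat.card P - 1 := by
  have h1 : {y : P | y ≠ x} = ({x} : Set P)ᶜ := by ext; simp
  have h2 := Set.ncard_add_ncard_compl ({x} : Set P)
  rw [Set.ncard_singleton] at h2
  rw [h1]; omega

private lemma ord_t : orderOf ((uu, 1) : G) = 2 := by
  rw [ord_mku, orderOf_one, Nat.lcm_one_right]

private lemma cardG : Nat.card G = 2 * Nat.card P := by
  rw [Nat.card_prod, cardMM]

variable (hp : p.Prime) (hodd : Odd p) (hP : ∃ k : ℕ, Nat.card P = p ^ k)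

include hp hodd hP

private lemma ordP_odd (x : P) : Odd (orderOf x) := by
  obtain ⟨k, hk⟩ := hP
  obtain ⟨j, _, hj⟩ := (Nat.dvd_prime_pow hp).mp (hk ▸ orderOf_dvd_natCard x)
  rw [hj]; exact hodd.pow

private lemma ordP_cmp (x y : P) : orderOf x ∣ orderOf y ∨ orderOf y ∣ orderOf x := by
  obtain ⟨k, hk⟩ := hP
  obtain ⟨a, _, ha⟩ := (Nat.dvd_prime_pow hp).mp (hk ▸ orderOf_dvd_natCard x)
  obtain ⟨b, _, hb⟩ := (Nat.dvd_prime_pow hp).mp (hk ▸ orderOf_dvd_natCard y)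
  rw [ha, hb]
  rcases le_total a b with h | h
  · exact Or.inl (pow_dvd_pow p h)
  · exact Or.inr (pow_dvd_pow p h)

private lemma ordP_not_two_dvd (x : P) : ¬ (2 ∣ orderOf x) := by
  have := Nat.odd_iff.mp (ordP_odd hp hodd hP x); omega

private lemma ordP_dvd_two (x : P) (h : orderOf x ∣ 2) : x = 1 := by
  have h2 := Nat.le_of_dvd (by norm_num) h
  have h3 := Nat.odd_iff.mp (ordP_odd hp hodd hP x)
  have h4 : orderOf x = 1 := by
    rcases (Nat.le_of_dvd (by norm_num) h).lt_or_eq with h5 | h5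
    · omega
    · omega
  exact orderOf_eq_one_iff.mp h4

private lemma adjA {x y : P} (hxy : x ≠ y) :
    SimpleGraph.Adj SG (1, x) (1, y) := by
  refine sp_adj.mpr ⟨by simp [hxy], ?_⟩
  rw [ord_mk1, ord_mk1]
  exact ordP_cmp hp hodd hP x y

private lemma adjB {x y : P} (hxy : x ≠ y) :
    SimpleGraph.Adj SG (uu, x) (uu, y) := by
  refine sp_adj.mpr ⟨by simp [hxy], ?_⟩
  rw [ord_mku, ord_mku]
  rcases ordP_cmp hp hodd hP x y with h | h
  · exact Or.inl (Nat.lcm_dvd (Nat.dvd_lcm_left _ _) (h.trans (Nat.dvd_lcm_right _ _)))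
  · exact Or.inr (Nat.lcm_dvd (Nat.dvd_lcm_left _ _) (h.trans (Nat.dvd_lcm_right _ _)))

private lemma adjX {x y : P} (h : orderOf x ∣ orderOf y) :
    SimpleGraph.Adj SG (1, x) (uu, y) := by
  refine sp_adj.mpr ⟨fun hEq => uu_ne_one (congrArg Prod.fst hEq).symm, Or.inl ?_⟩
  rw [ord_mk1, ord_mku]
  exact h.trans (Nat.dvd_lcm_right _ _)

private lemma not_adj_t1 (x : P) (hx : x ≠ 1) : ¬ SimpleGraph.Adj SG (uu, 1) (1, x) := by
  intro h
  rw [sp_adj, ord_t, ord_mk1] at h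
  rcases h.2 with h2 | h2
  · exact ordP_not_two_dvd hp hodd hP x h2
  · exact hx (ordP_dvd_two hp hodd hP x h2)

private lemma huniq (v : G) (hv : orderOf v = 2) : v = (uu, 1) := by
  obtain ⟨c, x⟩ := v
  rcases mm_cases c with rfl | rfl
  · rw [ord_mk1] at hv
    have := ordP_odd hp hodd hP x
    rw [hv] at this
    simp [Nat.odd_iff] at this
  · rw [ord_mku] at hv
    have h2 : orderOf x ∣ 2 := hv ▸ Nat.dvd_lcm_right 2 (orderOf x)
    rw [ordP_dvd_two hp hodd hP x h2]

private lemma tset : SimpleGraph.neighborSet SG (uu, 1) =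
    insert (1 : G) ((fun x : P => ((uu, x) : G)) '' {x : P | x ≠ 1}) := by
  ext ⟨c, x⟩
  simp only [SimpleGraph.mem_neighborSet, Set.mem_insert_iff, Set.mem_image, Set.mem_setOf_eq]
  constructor
  · intro h
    rcases mm_cases c with rfl | rfl
    · left
      by_contra hne
      have hx1 : x ≠ 1 := fun hx => hne (by rw [hx]; rfl)
      exact not_adj_t1 hp hodd hP x hx1 h
    · right
      refine ⟨x, fun hx => ?_, rfl⟩
      subst hx
      exact SimpleGraph.irrefl SG h
  · rintro (h | ⟨y, hy, hEq⟩)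
    · rw [h]
      refine sp_adj.mpr ⟨fun hEq => uu_ne_one (congrArg Prod.fst hEq), Or.inr ?_⟩
      rw [ord_t]
      simp
    · rw [← hEq]
      exact adjB hp hodd hP (fun h => hy h.symm)

private lemma degt : gDeg SG (uu, 1) = Nat.card P := by
  have hnm : (1 : G) ∉ (fun x : P => ((uu, x) : G)) '' {x : P | x ≠ 1} := by
    rintro ⟨y, _, hEq⟩
    exact uu_ne_one (congrArg Prod.fst hEq)
  rw [gDeg, tset hp hodd hP, Set.ncard_insert_of_notMem hnm,
    Set.ncard_image_of_injective _ mku_inj, ncard_ne]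
  have := Nat.card_pos (α := P)
  omega

private lemma deg_ge (v : G) (hv : orderOf v ≠ 2) : Nat.card P + 1 ≤ gDeg SG v := by
  obtain ⟨c, x⟩ := v
  have cardPos := Nat.card_pos (α := P)
  rcases mm_cases c with rfl | rfl
  · by_cases hx : x = 1
    · -- v = 1
      subst hx
      obtain ⟨x₀, hx₀⟩ := exists_ne (1 : P)
      have hsub : insert ((1 : Multiplicative (ZMod 2)), x₀)
          ((fun y : P => ((uu, y) : G)) '' Set.univ) ⊆ SimpleGraph.neighborSet SG (1, 1) := by
        rintro w (rfl | ⟨y, _, rfl⟩) <;>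
          refine sp_adj.mpr ⟨?_, Or.inl (by rw [ord_mk1, orderOf_one]; exact one_dvd _)⟩
        · exact fun hEq => hx₀ (congrArg Prod.snd hEq).symm
        · exact fun hEq => uu_ne_one (congrArg Prod.fst hEq).symm
      have hle := Set.ncard_le_ncard hsub (Set.toFinite _)
      have hnm : ((1 : Multiplicative (ZMod 2)), x₀) ∉
          (fun y : P => ((uu, y) : G)) '' Set.univ := by
        rintro ⟨y, _, hEq⟩
        exact uu_ne_one (congrArg Prod.fst hEq)
      rw [Set.ncard_insert_of_notMem hnm, Set.ncard_image_of_injective _ mku_inj,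
        Set.ncard_univ] at hle
      exact hle
    · -- v = (1,x), x ≠ 1
      have hxinv : x ≠ x⁻¹ := by
        intro hEq
        have : x ^ 2 = 1 := by rw [pow_two]; nth_rewrite 2 [hEq]; exact mul_inv_cancel x
        exact hx (ordP_dvd_two hp hodd hP x (orderOf_dvd_of_pow_eq_one this))
      have hsub : insert ((uu, x) : G) (insert ((uu, x⁻¹) : G)
          ((fun y : P => (((1 : Multiplicative (ZMod 2)), y) : G)) '' {y : P | y ≠ x}))
          ⊆ SimpleGraph.neighborSet SG (1, x) := by
        rintro w (rfl | rfl | ⟨y, hy, rfl⟩)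
        · exact adjX hp hodd hP dvd_rfl
        · exact adjX hp hodd hP (by rw [orderOf_inv])
        · exact adjA hp hodd hP (fun h => hy h.symm)
      have hle := Set.ncard_le_ncard hsub (Set.toFinite _)
      have hnm2 : ((uu, x⁻¹) : G) ∉
          (fun y : P => (((1 : Multiplicative (ZMod 2)), y) : G)) '' {y : P | y ≠ x} := by
        rintro ⟨y, _, hEq⟩
        exact uu_ne_one (congrArg Prod.fst hEq).symm
      have hnm1 : ((uu, x) : G) ∉ insert ((uu, x⁻¹) : G)
          ((fun y : P => (((1 : Multiplicative (ZMod 2)), y) : G)) '' {y : P | y ≠ x}) := by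
        rintro (hEq | ⟨y, _, hEq⟩)
        · exact hxinv (congrArg Prod.snd hEq)
        · exact uu_ne_one (congrArg Prod.fst hEq).symm
      rw [Set.ncard_insert_of_notMem hnm1, Set.ncard_insert_of_notMem hnm2,
        Set.ncard_image_of_injective _ mk1_inj, ncard_ne] at hle
      rw [gDeg]
      omega
  · -- c = uu
    have hx : x ≠ 1 := by
      intro hEq
      subst hEq
      exact hv (ord_t)
    have hsub : insert ((1 : G)) (insert (((1 : Multiplicative (ZMod 2)), x) : G)
        ((fun y : P => ((uu, y) : G)) '' {y : P | y ≠ x})) ⊆ SimpleGraph.neighborSet SG (uu, x) := by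
      rintro w (rfl | rfl | ⟨y, hy, rfl⟩)
      · refine sp_adj.mpr ⟨fun hEq => uu_ne_one (congrArg Prod.fst hEq), Or.inr ?_⟩
        have : orderOf (1 : G) = 1 := orderOf_one
        rw [this]; exact one_dvd _
      · exact (adjX hp hodd hP dvd_rfl).symm
      · exact adjB hp hodd hP (fun h => hy h.symm)
    have hle := Set.ncard_le_ncard hsub (Set.toFinite _)
    have hnm2 : (((1 : Multiplicative (ZMod 2)), x) : G) ∉
        (fun y : P => ((uu, y) : G)) '' {y : P | y ≠ x} := by
      rintro ⟨y, _, hEq⟩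
      exact uu_ne_one (congrArg Prod.fst hEq)
    have hnm1 : (1 : G) ∉ insert (((1 : Multiplicative (ZMod 2)), x) : G)
        ((fun y : P => ((uu, y) : G)) '' {y : P | y ≠ x}) := by
      rintro (hEq | ⟨y, _, hEq⟩)
      · exact hx (congrArg Prod.snd hEq).symm
      · exact uu_ne_one (congrArg Prod.fst hEq)
    rw [Set.ncard_insert_of_notMem hnm1, Set.ncard_insert_of_notMem hnm2,
      Set.ncard_image_of_injective _ mku_inj, ncard_ne] at hle
    rw [gDeg]
    omega

private lemma hmindeg : minDeg SG = Nat.card P := by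
  rw [minDeg]
  apply le_antisymm
  · exact Nat.sInf_le (Set.mem_range.mpr ⟨(uu, 1), degt hp hodd hP⟩)
  · refine le_csInf ⟨gDeg SG (uu, 1), Set.mem_range_self _⟩ ?_
    rintro n ⟨v, rfl⟩
    by_cases h : orderOf v = 2
    · rw [huniq hp hodd hP v h, degt hp hodd hP]
    · exact le_trans (Nat.le_succ _) (deg_ge hp hodd hP v h)

private lemma cross_pair {S : Set G} (hS : S.ncard < Nat.card P) :
    ∃ z y : P, ((1 : Multiplicative (ZMod 2)), z) ∉ S ∧ ((uu, y) : G) ∉ S ∧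
      SimpleGraph.Adj SG (1, z) (uu, y) := by
  by_contra hno
  push_neg at hno
  have hZne : ({z : P | ((1 : Multiplicative (ZMod 2)), z) ∉ S} : Set P).Nonempty := by
    by_contra hZ
    rw [Set.not_nonempty_iff_eq_empty] at hZ
    have hsub : (fun z : P => (((1 : Multiplicative (ZMod 2)), z) : G)) '' Set.univ ⊆ S := by
      rintro w ⟨z, _, rfl⟩
      by_contra hw
      have hzZ : z ∈ {z : P | ((1 : Multiplicative (ZMod 2)), z) ∉ S} := hw
      rw [hZ] at hzZ
      exact hzZ
    have hle := Set.ncard_le_ncard hsub (Set.toFinite _)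
    rw [Set.ncard_image_of_injective _ mk1_inj, Set.ncard_univ] at hle
    omega
  obtain ⟨zs, hzs, hzeq⟩ : ∃ zs, ((1 : Multiplicative (ZMod 2)), zs) ∉ S ∧
      orderOf zs = sInf (orderOf '' {z : P | ((1 : Multiplicative (ZMod 2)), z) ∉ S}) := by
    obtain ⟨zs, hzs, hz⟩ := Nat.sInf_mem (hZne.image orderOf)
    exact ⟨zs, hzs, hz⟩
  have hminz : ∀ z : P, ((1 : Multiplicative (ZMod 2)), z) ∉ S → orderOf zs ≤ orderOf z := by
    intro z hz
    rw [hzeq]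
    exact Nat.sInf_le (Set.mem_image_of_mem _ hz)
  set Ω : Set P := {w : P | orderOf w ∣ orderOf zs ∧ orderOf w ≠ orderOf zs} with hΩdef
  have hΩ1 : ∀ w ∈ Ω, (((1 : Multiplicative (ZMod 2)), w) : G) ∈ S := by
    intro w hw
    by_contra hws
    have hle := hminz w hws
    have hlt : orderOf w < orderOf zs :=
      lt_of_le_of_ne (Nat.le_of_dvd (orderOf_pos zs) hw.1) hw.2
    omega
  have hΩ2 : ∀ y : P, ((uu, y) : G) ∉ S → y ∈ Ω := by
    intro y hyS
    have hnadj := hno zs y hzs hyS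
    have hdvd : ¬ orderOf zs ∣ orderOf y := fun hd => hnadj (adjX hp hodd hP hd)
    rcases ordP_cmp hp hodd hP zs y with h | h
    · exact absurd h hdvd
    · exact ⟨h, fun he => hdvd (he ▸ dvd_rfl)⟩
  have hsub : ((fun w : P => (((1 : Multiplicative (ZMod 2)), w) : G)) '' Ω) ∪
      ((fun y : P => ((uu, y) : G)) '' Ωᶜ) ⊆ S := by
    rintro v (⟨w, hw, rfl⟩ | ⟨y, hy, rfl⟩)
    · exact hΩ1 w hw
    · by_contra hvs
      exact hy (hΩ2 y hvs)
  have hdisj : Disjoint ((fun w : P => (((1 : Multiplicative (ZMod 2)), w) : G)) '' Ω)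
      ((fun y : P => ((uu, y) : G)) '' Ωᶜ) := by
    rw [Set.disjoint_left]
    rintro v ⟨w, _, rfl⟩ ⟨y, _, hEq⟩
    exact uu_ne_one (congrArg Prod.fst hEq)
  have hle := Set.ncard_le_ncard hsub (Set.toFinite _)
  rw [Set.ncard_union_eq hdisj, Set.ncard_image_of_injective _ mk1_inj,
    Set.ncard_image_of_injective _ mku_inj] at hle
  have hcompl := Set.ncard_add_ncard_compl Ω
  omega

private lemma precon {S : Set G} (hS : S.ncard < Nat.card P) :
    (SimpleGraph.induce Sᶜ SG).Preconnected := by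
  obtain ⟨z, y, hz, hy, hadj⟩ := cross_pair hp hodd hP hS
  have hz' : (((1 : Multiplicative (ZMod 2)), z) : G) ∈ Sᶜ := hz
  have hy' : ((uu, y) : G) ∈ Sᶜ := hy
  have hreach : ∀ c : ↥(Sᶜ), (SimpleGraph.induce Sᶜ SG).Reachable c ⟨(1, z), hz'⟩ := by
    rintro ⟨⟨cf, cx⟩, hc⟩
    have hstep : (SimpleGraph.induce Sᶜ SG).Reachable ⟨(uu, y), hy'⟩ ⟨(1, z), hz'⟩ :=
      (induce_adj' (u := ⟨(uu, y), hy'⟩) (v := ⟨(1, z), hz'⟩) hadj.symm).reachable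
    rcases mm_cases cf with rfl | rfl
    · by_cases hce : cx = z
      · subst hce
        exact SimpleGraph.Reachable.refl _
      · exact (induce_adj' (u := ⟨(1, cx), hc⟩) (v := ⟨(1, z), hz'⟩)
          (adjA hp hodd hP hce)).reachable
    · by_cases hce : cx = y
      · subst hce
        exact hstep
      · exact ((induce_adj' (u := ⟨(uu, cx), hc⟩) (v := ⟨(uu, y), hy'⟩)
          (adjB hp hodd hP hce)).reachable).trans hstep
  intro a b
  exact (hreach a).trans (hreach b).symm

private lemma hvconn : vertexConn SG = Nat.card P := by
  have cardPos := Nat.card_pos (α := P)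
  have hmem : Nat.card P ∈ {n : ℕ | ∃ S : Set G, S.ncard = n ∧ Sᶜ.Nonempty ∧
      (¬ (SimpleGraph.induce Sᶜ SG).Preconnected ∨ Sᶜ.ncard = 1)} := by
    refine ⟨SimpleGraph.neighborSet SG (uu, 1), degt hp hodd hP, ⟨(uu, 1), fun h => SimpleGraph.irrefl SG h⟩, Or.inl ?_⟩
    intro hpre
    obtain ⟨x₀, hx₀⟩ := exists_ne (1 : P)
    have htmem : ((uu, 1) : G) ∈ (SimpleGraph.neighborSet SG (uu, 1))ᶜ := fun h => SimpleGraph.irrefl SG h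
    have hb : (((1 : Multiplicative (ZMod 2)), x₀) : G) ∈ (SimpleGraph.neighborSet SG (uu, 1))ᶜ :=
      fun h => not_adj_t1 hp hodd hP x₀ hx₀ h
    rcases reach_cases (hpre ⟨(uu, 1), htmem⟩ ⟨(1, x₀), hb⟩) with hEq | ⟨⟨w, hw⟩, hadj⟩
    · exact uu_ne_one (congrArg Prod.fst (congrArg Subtype.val hEq))
    · exact hw hadj
  apply le_antisymm
  · exact Nat.sInf_le hmem
  · apply le_csInf ⟨_, hmem⟩
    rintro n ⟨S, rfl, hne, hdis | h1⟩
    · by_contra hlt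
      push_neg at hlt
      exact hdis (precon hp hodd hP hlt)
    · have h2 := Set.ncard_add_ncard_compl S
      rw [h1, cardG] at h2
      omega

end Main

/-- Let `p` be an odd prime, `P` a nontrivial finite `p`-group and
`G = ℤ₂ × P`. Then the minimum degree of the order superpower graph of `G` is
`|P|`, it is attained exactly at the unique element of order `2`, and the vertex
connectivity also equals `|P|`. -/
theorem stmt_19 (p : ℕ) (hp : p.Prime) (hodd : Odd p)
    (P : Type*) [Group P] [Fintype P] [Nontrivial P]
    (hP : ∃ k : ℕ, Nat.card P = p ^ k) :
    minDeg (superpowerGraph (Multiplicative (ZMod 2) × P)) = Nat.card P ∧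
      (∃! x : Multiplicative (ZMod 2) × P, orderOf x = 2) ∧
      (∀ v : Multiplicative (ZMod 2) × P,
        gDeg (superpowerGraph (Multiplicative (ZMod 2) × P)) v =
            minDeg (superpowerGraph (Multiplicative (ZMod 2) × P)) ↔
          orderOf v = 2) ∧
      vertexConn (superpowerGraph (Multiplicative (ZMod 2) × P)) = Nat.card P := by
  refine ⟨hmindeg hp hodd hP, ⟨(uu, 1), ord_t, fun v hv => huniq hp hodd hP v hv⟩, ?_, hvconn hp hodd hP⟩
  intro v
  constructor
  · intro h
    by_contra hv
    have h1 := deg_ge hp hodd hP v hv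
    rw [h, hmindeg hp hodd hP] at h1
    omega
  · intro h
    rw [huniq hp hodd hP v h, degt hp hodd hP, hmindeg hp hodd hP]
end
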